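/- Let K/F be a Galois extension of number fields of degree n, σ ∈ Gal(K/F), δ an F-linear left σ-derivation on K with δ(O_K) ⊆ O_K, and f ∈ O_K[t;σ,δ] monic of degree m ≥ 2. Let Λ = O_K[t;σ,δ]/O_K[t;σ,δ]f be the natural order and I an ideal of O_F. Then I·Λ = {Σ_{i=0}^{m-1} aᵢtⁱ : aᵢ ∈ I·O_K} and the reduction map g ↦ ḡ induces an isomorphism of nonassociative unital O_F/I-algebras Λ/(I·Λ) ≅ (O_K/I·O_K)[t;σ̄,δ̄]/(O_K/I·O_K)[t;σ̄,δ̄]f̄. -/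

import Mathlib

/-- An abstract presentation of the skew polynomial ring `S[t;σ,δ]`:
a ring `R` together with an embedding of `S`, a variable `t` satisfying the
commutation rule `t·a = σ(a)·t + δ(a)`, such that the `t^i` form a basis of `R`
as a left `S`-module (encoded by the coefficient equivalence). -/
structure SkewPolyRing (S : Type*) (R : Type*) [Ring S] [Ring R]
    (σ : S →+* S) (δ : S →+ S) : Type _ where
  ι : S →+* R
  t : R
  t_comm : ∀ a : S, t * ι a = ι (σ a) * t + ι (δ a)
  coeff : R ≃+ (ℕ →₀ S)
  coeff_symm : ∀ p : ℕ →₀ S, coeff.symm p = p.sum fun i a => ι a * t ^ i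

namespace SkewPolyRing

variable {S R : Type*} [Ring S] [Ring R] {σ : S →+* S} {δ : S →+ S}

/-- `g` has degree `< m`. -/
def degLT (P : SkewPolyRing S R σ δ) (g : R) (m : ℕ) : Prop :=
  ∀ i, m ≤ i → P.coeff g i = 0

/-- The degree of a skew polynomial (with `deg 0 = 0` by convention). -/
noncomputable def deg (P : SkewPolyRing S R σ δ) (g : R) : ℕ :=
  (P.coeff g).support.sup id

/-- `f` is monic of degree `m`. -/
def MonicDeg (P : SkewPolyRing S R σ δ) (f : R) (m : ℕ) : Prop :=
  P.coeff f m = 1 ∧ ∀ i, m < i → P.coeff f i = 0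

/-- `modr` computes a remainder of right division by `f`. -/
def IsModr (P : SkewPolyRing S R σ δ) (f : R) (m : ℕ) (modr : R → R) : Prop :=
  ∀ g : R, P.degLT (modr g) m ∧ ∃ q : R, g = q * f + modr g

end SkewPolyRing

/-!
Remainders of right division by a monic `f` of degree `m` are unique, because a nonzero left
multiple of `f` has degree at least `m`. Coefficientwise reduction modulo `J = I·O_K` is a ring
homomorphism `O_K[t;σ,δ] → (O_K/J)[t;σ̄,δ̄]` sending `f` to the monic `f̄`, so by uniqueness it
commutes with taking remainders and is multiplicative for the Petit products; its kernel on `Λ`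
consists of the polynomials with coefficients in `J`. The same compatibility shows that remainders
of polynomials with coefficients in `J` again have coefficients in `J`, giving one inclusion for
`I·Λ`; conversely `b tⁱ` with `b = c a`, `a ∈ I`, is the Petit product of `a` with `c tⁱ`.
-/

namespace SkewPolyRing

section Ring

variable {S R : Type*} [Ring S] [Ring R] {σ : S →+* S} {δ : S →+ S}
  (P : SkewPolyRing S R σ δ)

lemma coeff_symm_single (i : ℕ) (a : S) :
    P.coeff.symm (Finsupp.single i a) = P.ι a * P.t ^ i := by
  rw [P.coeff_symm, Finsupp.sum_single_index (by simp)]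

lemma coeff_ι_mul_t_pow (a : S) (i : ℕ) :
    P.coeff (P.ι a * P.t ^ i) = Finsupp.single i a := by
  rw [← P.coeff_symm_single, AddEquiv.apply_symm_apply]

lemma sum_coeff (g : R) : ((P.coeff g).sum fun i a => P.ι a * P.t ^ i) = g := by
  rw [← P.coeff_symm, AddEquiv.symm_apply_apply]

lemma monomial_induction {p : R → Prop} (zero : p 0) (add : ∀ x y, p x → p y → p (x + y))
    (monomial : ∀ a i, p (P.ι a * P.t ^ i)) (g : R) : p g := by
  rw [← P.sum_coeff g]
  exact Finset.sum_induction _ p add zero fun i _ => monomial _ _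

lemma t_mul_ι_mul_t_pow (a : S) (i : ℕ) :
    P.t * (P.ι a * P.t ^ i) = P.ι (σ a) * P.t ^ (i + 1) + P.ι (δ a) * P.t ^ i := by
  rw [← mul_assoc, P.t_comm, add_mul, mul_assoc, ← pow_succ']

lemma coeff_ι_mul (a : S) (y : R) (n : ℕ) :
    P.coeff (P.ι a * y) n = a * P.coeff y n := by
  induction y using P.monomial_induction with
  | zero => simp
  | add x y hx hy => rw [mul_add, map_add, Finsupp.add_apply, hx, hy, map_add,
      Finsupp.add_apply, mul_add]
  | monomial b j =>
    rw [← mul_assoc, ← map_mul, P.coeff_ι_mul_t_pow, P.coeff_ι_mul_t_pow,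
      Finsupp.single_apply, Finsupp.single_apply, mul_ite, mul_zero]

lemma coeff_mul_t_pow (z : R) (i j : ℕ) :
    P.coeff (z * P.t ^ j) (i + j) = P.coeff z i := by
  induction z using P.monomial_induction with
  | zero => simp
  | add x y hx hy => rw [add_mul, map_add P.coeff, Finsupp.add_apply, hx, hy, map_add P.coeff,
      Finsupp.add_apply]
  | monomial b l =>
    rw [mul_assoc, ← pow_add, P.coeff_ι_mul_t_pow, P.coeff_ι_mul_t_pow,
      Finsupp.single_apply, Finsupp.single_apply]
    simp

lemma degLT_zero (m : ℕ) : P.degLT 0 m := fun i _ => by simp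

lemma degLT_add {x y : R} {m : ℕ} (hx : P.degLT x m) (hy : P.degLT y m) :
    P.degLT (x + y) m := fun i hi => by
  rw [map_add, Finsupp.add_apply, hx i hi, hy i hi, add_zero]

lemma degLT_sub {x y : R} {m : ℕ} (hx : P.degLT x m) (hy : P.degLT y m) :
    P.degLT (x - y) m := fun i hi => by
  rw [map_sub, Finsupp.sub_apply, hx i hi, hy i hi, sub_zero]

lemma degLT_mono {g : R} {m m' : ℕ} (h : m ≤ m') (hg : P.degLT g m) : P.degLT g m' :=
  fun i hi => hg i (h.trans hi)

lemma degLT_sum {ι : Type*} (s : Finset ι) (h : ι → R) {m : ℕ}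
    (hh : ∀ i ∈ s, P.degLT (h i) m) : P.degLT (∑ i ∈ s, h i) m := fun n hn => by
  rw [map_sum, Finsupp.finsetSum_apply]
  exact Finset.sum_eq_zero fun i hi => hh i hi n hn

lemma degLT_ι_mul_t_pow (a : S) {i m : ℕ} (hi : i < m) : P.degLT (P.ι a * P.t ^ i) m :=
  fun n hn => by rw [P.coeff_ι_mul_t_pow, Finsupp.single_apply, if_neg (by omega)]

lemma degLT_ι_mul (a : S) {y : R} {m : ℕ} (hy : P.degLT y m) : P.degLT (P.ι a * y) m :=
  fun n hn => by rw [P.coeff_ι_mul, hy n hn, mul_zero]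

lemma degLT_mul_t_pow {z : R} {m : ℕ} (j : ℕ) (hz : P.degLT z m) :
    P.degLT (z * P.t ^ j) (m + j) := fun n hn => by
  obtain ⟨i, rfl⟩ : ∃ i, n = i + j := ⟨n - j, by omega⟩
  rw [P.coeff_mul_t_pow]
  exact hz i (by omega)

lemma degLT_t_pow_mul_ι (i : ℕ) (a : S) : P.degLT (P.t ^ i * P.ι a) (i + 1) := by
  induction i generalizing a with
  | zero => simpa using P.degLT_ι_mul_t_pow a (i := 0) one_pos
  | succ i ih =>
    have h : P.t ^ (i + 1) * P.ι a = P.t ^ i * P.ι (σ a) * P.t ^ 1 + P.t ^ i * P.ι (δ a) := by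
      rw [pow_succ, mul_assoc, P.t_comm, mul_add, pow_one, mul_assoc]
    rw [h]
    exact P.degLT_add (P.degLT_mul_t_pow 1 (ih (σ a))) (P.degLT_mono (by omega) (ih (δ a)))

variable {P} in
lemma degLT.lt_of_mem_support {g : R} {m i : ℕ} (hg : P.degLT g m)
    (hi : i ∈ (P.coeff g).support) : i < m :=
  lt_of_not_ge fun h => Finsupp.mem_support_iff.mp hi (hg i h)

lemma degLT_mul {x y : R} {a b : ℕ} (hx : P.degLT x (a + 1)) (hy : P.degLT y b) :
    P.degLT (x * y) (a + b) := by
  rw [← P.sum_coeff x, ← P.sum_coeff y]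
  simp only [Finsupp.sum, Finset.sum_mul, Finset.mul_sum]
  refine P.degLT_sum _ _ fun j hj => P.degLT_sum _ _ fun i hi => ?_
  have := hx.lt_of_mem_support hi
  have := hy.lt_of_mem_support hj
  rw [mul_assoc, ← mul_assoc (P.t ^ i)]
  exact P.degLT_mono (by omega)
    (P.degLT_ι_mul _ (P.degLT_mul_t_pow j (P.degLT_t_pow_mul_ι i _)))

lemma degLT_deg_add_one (g : R) : P.degLT g (P.deg g + 1) := fun n hn => by
  by_contra h
  have : n ≤ P.deg g := Finset.le_sup (f := id) (Finsupp.mem_support_iff.mpr h)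
  omega

lemma coeff_deg_ne_zero {g : R} (hg : g ≠ 0) : P.coeff g (P.deg g) ≠ 0 := by
  have hne : (P.coeff g).support.Nonempty :=
    Finsupp.support_nonempty_iff.mpr ((map_ne_zero_iff _ P.coeff.injective).mpr hg)
  obtain ⟨i, hi, hdeg⟩ := Finset.exists_mem_eq_sup _ hne id
  rw [deg, hdeg]
  exact Finsupp.mem_support_iff.mp hi

lemma coeff_mul_deg_add {f : R} {m : ℕ} (hf : P.MonicDeg f m) (u : R) :
    P.coeff (u * f) (P.deg u + m) = P.coeff u (P.deg u) := by
  have hlow : P.degLT (f - P.ι 1 * P.t ^ m) m := fun n hn => by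
    rw [map_sub, Finsupp.sub_apply, P.coeff_ι_mul_t_pow, Finsupp.single_apply]
    rcases hn.eq_or_lt with rfl | hlt
    · rw [hf.1, if_pos rfl, sub_self]
    · rw [hf.2 n hlt, if_neg hlt.ne, sub_zero]
  have hsplit : u * f = u * (f - P.ι 1 * P.t ^ m) + u * P.t ^ m := by
    rw [map_one, one_mul, mul_sub, sub_add_cancel]
  rw [hsplit, map_add P.coeff, Finsupp.add_apply, P.degLT_mul (P.degLT_deg_add_one u) hlow _ le_rfl,
    zero_add, P.coeff_mul_t_pow]

lemma eq_zero_of_degLT_mul {f u : R} {m : ℕ} (hf : P.MonicDeg f m)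
    (h : P.degLT (u * f) m) : u = 0 := by
  by_contra hu
  exact P.coeff_deg_ne_zero hu (P.coeff_mul_deg_add hf u ▸ h _ (Nat.le_add_left m _))

variable {P}

lemma IsModr.eq_of_eq_mul_add {f : R} {m : ℕ} {modr : R → R} (hmodr : P.IsModr f m modr)
    (hf : P.MonicDeg f m) {g q r : R} (hr : P.degLT r m) (h : g = q * f + r) :
    modr g = r := by
  obtain ⟨hdeg, q', hq'⟩ := hmodr g
  have hdiff : (q - q') * f = modr g - r := by
    rw [sub_mul, sub_eq_sub_iff_add_eq_add, ← h]
    exact hq'.trans (add_comm _ _)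
  have hq : q - q' = 0 := P.eq_zero_of_degLT_mul hf (hdiff ▸ P.degLT_sub hdeg hr)
  rw [hq, zero_mul] at hdiff
  exact sub_eq_zero.mp hdiff.symm

lemma IsModr.apply_eq_self {f : R} {m : ℕ} {modr : R → R} (hmodr : P.IsModr f m modr)
    (hf : P.MonicDeg f m) {g : R} (hg : P.degLT g m) : modr g = g :=
  hmodr.eq_of_eq_mul_add hf hg (q := 0) (by rw [zero_mul, zero_add])

variable (P)

def degLTWithCoeffsIn (m : ℕ) (J : Ideal S) : AddSubgroup R where
  carrier := {g | P.degLT g m ∧ ∀ i, P.coeff g i ∈ J}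
  zero_mem' := ⟨P.degLT_zero m, fun i => by simp⟩
  add_mem' := fun hx hy => ⟨P.degLT_add hx.1 hy.1, fun i => by
    rw [map_add, Finsupp.add_apply]; exact J.add_mem (hx.2 i) (hy.2 i)⟩
  neg_mem' := fun hx => ⟨fun i hi => by rw [map_neg, Finsupp.neg_apply, hx.1 i hi, neg_zero],
    fun i => by rw [map_neg, Finsupp.neg_apply]; exact J.neg_mem (hx.2 i)⟩

section Reduction

variable {S' R' : Type*} [Ring S'] [Ring R'] {σ' : S' →+* S'} {δ' : S' →+ S'}
  (P' : SkewPolyRing S' R' σ' δ') (φ : S →+* S')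

noncomputable def reduce : R →+ R' :=
  P'.coeff.symm.toAddMonoidHom.comp
    ((Finsupp.mapRange.addMonoidHom φ.toAddMonoidHom).comp P.coeff.toAddMonoidHom)

lemma coeff_reduce (g : R) (n : ℕ) : P'.coeff (P.reduce P' φ g) n = φ (P.coeff g n) := by
  simp [reduce]

lemma reduce_ι_mul_t_pow (a : S) (i : ℕ) :
    P.reduce P' φ (P.ι a * P.t ^ i) = P'.ι (φ a) * P'.t ^ i := by
  simp [reduce, P.coeff_ι_mul_t_pow, P'.coeff_symm_single]

lemma reduce_one : P.reduce P' φ 1 = 1 := by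
  simpa using P.reduce_ι_mul_t_pow P' φ 1 0

lemma reduce_ι_mul (a : S) (y : R) :
    P.reduce P' φ (P.ι a * y) = P'.ι (φ a) * P.reduce P' φ y := by
  induction y using P.monomial_induction with
  | zero => simp
  | add x y hx hy => rw [mul_add, map_add, hx, hy, map_add, mul_add]
  | monomial b j =>
    rw [← mul_assoc, ← map_mul, P.reduce_ι_mul_t_pow, P.reduce_ι_mul_t_pow, map_mul, map_mul,
      mul_assoc]

variable {P' φ}

section Compatible

variable (hσ : ∀ a, σ' (φ a) = φ (σ a)) (hδ : ∀ a, δ' (φ a) = φ (δ a))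
include hσ hδ

lemma reduce_t_mul (y : R) : P.reduce P' φ (P.t * y) = P'.t * P.reduce P' φ y := by
  induction y using P.monomial_induction with
  | zero => simp
  | add x y hx hy => rw [mul_add, map_add, hx, hy, map_add, mul_add]
  | monomial b j =>
    rw [P.t_mul_ι_mul_t_pow, map_add, P.reduce_ι_mul_t_pow, P.reduce_ι_mul_t_pow,
      P.reduce_ι_mul_t_pow, P'.t_mul_ι_mul_t_pow, hσ, hδ]

lemma reduce_t_pow_mul (i : ℕ) (y : R) :
    P.reduce P' φ (P.t ^ i * y) = P'.t ^ i * P.reduce P' φ y := by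
  induction i with
  | zero => rw [pow_zero, one_mul, pow_zero, one_mul]
  | succ i ih => rw [pow_succ', mul_assoc, P.reduce_t_mul hσ hδ, ih, pow_succ', mul_assoc]

lemma reduce_mul (x y : R) : P.reduce P' φ (x * y) = P.reduce P' φ x * P.reduce P' φ y := by
  induction x using P.monomial_induction with
  | zero => simp
  | add x x' hx hx' => rw [add_mul, map_add, hx, hx', map_add, add_mul]
  | monomial a i =>
    rw [mul_assoc, P.reduce_ι_mul, P.reduce_t_pow_mul hσ hδ, P.reduce_ι_mul_t_pow, mul_assoc]

end Compatible

lemma degLT_reduce {g : R} {m : ℕ} (hg : P.degLT g m) : P'.degLT (P.reduce P' φ g) m :=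
  fun n hn => by rw [P.coeff_reduce, hg n hn, map_zero]

lemma reduce_eq_zero_iff {g : R} :
    P.reduce P' φ g = 0 ↔ ∀ i, P.coeff g i ∈ RingHom.ker φ := by
  rw [← map_eq_zero_iff P'.coeff P'.coeff.injective, Finsupp.ext_iff]
  simp only [P.coeff_reduce, Finsupp.zero_apply, RingHom.mem_ker]

lemma MonicDeg.reduce {f : R} {m : ℕ} (hf : P.MonicDeg f m) :
    P'.MonicDeg (P.reduce P' φ f) m :=
  ⟨by rw [P.coeff_reduce, hf.1, map_one], fun i hi => by rw [P.coeff_reduce, hf.2 i hi, map_zero]⟩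

lemma exists_degLT_reduce_eq (hφ : Function.Surjective φ) {y : R'} {m : ℕ}
    (hy : P'.degLT y m) : ∃ g, P.degLT g m ∧ P.reduce P' φ g = y := by
  choose lift hlift using hφ
  refine ⟨(P'.coeff y).sum fun i b => P.ι (lift b) * P.t ^ i,
    P.degLT_sum _ _ fun i hi => P.degLT_ι_mul_t_pow _ (hy.lt_of_mem_support hi), ?_⟩
  conv_rhs => rw [← P'.sum_coeff y]
  rw [Finsupp.sum, map_sum]
  exact Finset.sum_congr rfl fun i _ => by rw [P.reduce_ι_mul_t_pow, hlift]

section Modr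

variable (hσ : ∀ a, σ' (φ a) = φ (σ a)) (hδ : ∀ a, δ' (φ a) = φ (δ a))
  {f : R} {m : ℕ} (hf : P.MonicDeg f m) {modr : R → R} (hmodr : P.IsModr f m modr)
  {modr' : R' → R'} (hmodr' : P'.IsModr (P.reduce P' φ f) m modr')
include hσ hδ hf hmodr hmodr'

lemma reduce_modr (g : R) : P.reduce P' φ (modr g) = modr' (P.reduce P' φ g) := by
  obtain ⟨hdeg, q, hq⟩ := hmodr g
  refine (hmodr'.eq_of_eq_mul_add (q := P.reduce P' φ q) (hf.reduce P) (P.degLT_reduce hdeg) ?_).symm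
  rw [← P.reduce_mul hσ hδ, ← map_add, ← hq]

lemma coeff_modr_mem_ker {g : R} (hg : ∀ i, P.coeff g i ∈ RingHom.ker φ) (i : ℕ) :
    P.coeff (modr g) i ∈ RingHom.ker φ := by
  rw [← P.reduce_eq_zero_iff (P' := P')] at hg
  revert i
  rw [← P.reduce_eq_zero_iff (P' := P'), P.reduce_modr hσ hδ hf hmodr hmodr', hg,
    hmodr'.apply_eq_self (hf.reduce P) (P'.degLT_zero m)]

end Modr

end Reduction

end Ring

section CommRing

variable {S₀ S R : Type*} [CommRing S₀] [CommRing S] [Algebra S₀ S] [Ring R]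
  {σ : S →+* S} {δ : S →+ S} (P : SkewPolyRing S R σ δ)

/-- `I·Λ`, where `modr (ι a * l)` is the Petit product `a ∘ l` in `Λ`. -/
def scalarIdealSpan (modr : R → R) (m : ℕ) (I : Ideal S₀) : AddSubgroup R :=
  AddSubgroup.closure {x : R | ∃ (a : S₀) (l : R), a ∈ I ∧ P.degLT l m ∧
    x = modr (P.ι (algebraMap S₀ S a) * l)}

variable {P} {f : R} {m : ℕ} (hf : P.MonicDeg f m) {modr : R → R} (hmodr : P.IsModr f m modr)
  (I : Ideal S₀)
include hf hmodr

lemma ι_mul_t_pow_mem_scalarIdealSpan {i : ℕ} (hi : i < m) {b : S}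
    (hb : b ∈ I.map (algebraMap S₀ S)) : P.ι b * P.t ^ i ∈ P.scalarIdealSpan modr m I := by
  suffices ∀ c, P.ι (c * b) * P.t ^ i ∈ P.scalarIdealSpan modr m I by simpa using this 1
  induction hb using Submodule.span_induction with
  | mem x hx =>
    obtain ⟨a, ha, rfl⟩ := hx
    intro c
    have hl : P.degLT (P.ι c * P.t ^ i) m := P.degLT_ι_mul_t_pow c hi
    have hprod : P.ι (c * algebraMap S₀ S a) * P.t ^ i
        = modr (P.ι (algebraMap S₀ S a) * (P.ι c * P.t ^ i)) := by
      rw [hmodr.apply_eq_self hf (P.degLT_ι_mul _ hl), ← mul_assoc, ← map_mul, mul_comm]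
    rw [hprod]
    exact AddSubgroup.subset_closure ⟨a, _, ha, hl, rfl⟩
  | zero => simp
  | add x y _ _ hx hy =>
    intro c
    rw [mul_add, map_add, add_mul]
    exact add_mem (hx c) (hy c)
  | smul r x _ hx =>
    intro c
    rw [smul_eq_mul, ← mul_assoc]
    exact hx (c * r)

theorem scalarIdealSpan_eq
    (hmodrJ : ∀ g, (∀ i, P.coeff g i ∈ I.map (algebraMap S₀ S)) →
      ∀ i, P.coeff (modr g) i ∈ I.map (algebraMap S₀ S)) :
    P.scalarIdealSpan modr m I = P.degLTWithCoeffsIn m (I.map (algebraMap S₀ S)) := by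
  apply le_antisymm
  · refine (AddSubgroup.closure_le _).mpr ?_
    rintro _ ⟨a, l, ha, -, rfl⟩
    refine ⟨(hmodr _).1, hmodrJ _ fun i => ?_⟩
    rw [P.coeff_ι_mul]
    exact Ideal.mul_mem_right _ _ (Ideal.mem_map_of_mem _ ha)
  · rintro g ⟨hg, hgJ⟩
    rw [← P.sum_coeff g]
    exact sum_mem fun i hi =>
      ι_mul_t_pow_mem_scalarIdealSpan hf hmodr I (hg.lt_of_mem_support hi) (hgJ i)

end CommRing

end SkewPolyRing

open NumberField Finsupp

theorem natural_order_quotient_iso_general {F K R R' : Type*} [Field F] [Field K]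
    [Algebra F K] [Ring R] [Ring R']
    (σ₀ : 𝓞 K →+* 𝓞 K)
    (δ₀ : 𝓞 K →+ 𝓞 K)
    -- the natural order `Λ`, inside the skew polynomial ring `R = O_K[t;σ,δ]`:
    (P : SkewPolyRing (𝓞 K) R σ₀ δ₀) (f : R) (m : ℕ)
    (hf : P.MonicDeg f m) (modr : R → R) (hmodr : P.IsModr f m modr)
    -- an ideal `I` of `O_F`, and `J = I·O_K`:
    (I : Ideal (𝓞 F)) (J : Ideal (𝓞 K)) (hJ : J = Ideal.map (algebraMap (𝓞 F) (𝓞 K)) I)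
    -- the induced maps `σ̄`, `δ̄` on `O_K/J` and the skew polynomial ring
    -- `R' = (O_K/J)[t;σ̄,δ̄]`:
    (σb : (𝓞 K ⧸ J) →+* (𝓞 K ⧸ J))
    (hσb : ∀ x : 𝓞 K, σb (Ideal.Quotient.mk J x) = Ideal.Quotient.mk J (σ₀ x))
    (δb : (𝓞 K ⧸ J) →+ (𝓞 K ⧸ J))
    (hδb : ∀ x : 𝓞 K, δb (Ideal.Quotient.mk J x) = Ideal.Quotient.mk J (δ₀ x))
    (P' : SkewPolyRing (𝓞 K ⧸ J) R' σb δb)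
    -- the reduction map `red : R → R'` and the reduced polynomial `f̄`:
    (red : R → R')
    (hred : ∀ g : R, red g = P'.coeff.symm
      (Finsupp.mapRange (Ideal.Quotient.mk J) (map_zero _) (P.coeff g)))
    (modr' : R' → R') (hmodr' : P'.IsModr (red f) m modr') :
    -- (1)  `I·Λ = {Σ_{i<m} aᵢ tⁱ : aᵢ ∈ I·O_K}`:
    (∀ g : R,
      (g ∈ AddSubgroup.closure {x : R | ∃ (a : 𝓞 F) (l : R), a ∈ I ∧ P.degLT l m ∧
          x = modr (P.ι (algebraMap (𝓞 F) (𝓞 K) a) * l)}) ↔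
      (P.degLT g m ∧ ∀ i, P.coeff g i ∈ J)) ∧
    -- (2)  `red` is additive and unital:
    (∀ g h : R, red (g + h) = red g + red h) ∧ red 1 = 1 ∧
    -- (3)  `red` is multiplicative for the Petit products:
    (∀ g h : R, P.degLT g m → P.degLT h m →
        red (modr (g * h)) = modr' (red g * red h)) ∧
    -- (4)  `red` maps `Λ` onto the reduced Petit algebra:
    (∀ g : R, P.degLT g m → P'.degLT (red g) m) ∧
    (∀ y : R', P'.degLT y m → ∃ g : R, P.degLT g m ∧ red g = y) ∧
    -- (5)  the kernel of `red` on `Λ` is `I·Λ`: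
    (∀ g : R, P.degLT g m → (red g = 0 ↔ ∀ i, P.coeff g i ∈ J)) := by
  subst hJ
  obtain rfl : red = P.reduce P' (Ideal.Quotient.mk _) := funext hred
  have hmodrJ : ∀ g, (∀ i, P.coeff g i ∈ I.map (algebraMap (𝓞 F) (𝓞 K))) →
      ∀ i, P.coeff (modr g) i ∈ I.map (algebraMap (𝓞 F) (𝓞 K)) := by
    simpa only [Ideal.mk_ker] using fun g => P.coeff_modr_mem_ker hσb hδb hf hmodr hmodr' (g := g)
  refine ⟨fun g => SetLike.ext_iff.mp (P.scalarIdealSpan_eq hf hmodr I hmodrJ) g, map_add _,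
    P.reduce_one P' _, fun g h _ _ => ?_, fun g => P.degLT_reduce, fun y =>
    P.exists_degLT_reduce_eq Ideal.Quotient.mk_surjective, fun g _ => ?_⟩
  · rw [P.reduce_modr hσb hδb hf hmodr hmodr', P.reduce_mul hσb hδb]
  · rw [P.reduce_eq_zero_iff, Ideal.mk_ker]

set_option synthInstance.maxHeartbeats 1000000 in
set_option maxHeartbeats 1000000 in
/-- Let `K/F` be a Galois extension of number fields of degree `n`, `σ ∈ Gal(K/F)`
(restricting to `σ₀` on `O_K`), `δ` an `F`-linear left `σ`-derivation on `K` with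
`δ(O_K) ⊆ O_K` (restricting to `δ₀`), and `f ∈ O_K[t;σ,δ]` monic of degree `m ≥ 2` with
natural order `Λ = O_K[t;σ,δ]/O_K[t;σ,δ]f` (the Petit algebra of `f` over `O_K`, with
product `g ∘ h = modr (g·h)`).  Let `I` be an ideal of `O_F` and `J = I·O_K`.  Then the
two-sided ideal `I·Λ` generated by `I` equals `{Σ_{i<m} aᵢtⁱ : aᵢ ∈ I·O_K}`, and
coefficientwise reduction `g ↦ ḡ` induces an isomorphism of unital nonassociative
`O_F/I`-algebras `Λ/(I·Λ) ≅ (O_K/I·O_K)[t;σ̄,δ̄]/(O_K/I·O_K)[t;σ̄,δ̄]f̄`: the reduction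
map is additive, unital, multiplicative for the Petit products, surjective onto the
reduced Petit algebra, and its kernel is `I·Λ`. -/
theorem natural_order_quotient_iso {F K R R' : Type*} [Field F] [Field K]
    [NumberField F] [NumberField K] [Algebra F K] [IsGalois F K] [Ring R] [Ring R']
    (n : ℕ) (hn : Module.finrank F K = n)
    (σ : K ≃ₐ[F] K) (σ₀ : 𝓞 K →+* 𝓞 K) (hσ₀ : ∀ x : 𝓞 K, (σ₀ x : K) = σ (x : K))
    (δ : K →+ K) (hδ : ∀ a b : K, δ (a * b) = σ a * δ b + δ a * b)
    (hδF : ∀ (c : F) (x : K), δ (algebraMap F K c * x) = algebraMap F K c * δ x)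
    (δ₀ : 𝓞 K →+ 𝓞 K) (hδ₀ : ∀ x : 𝓞 K, (δ₀ x : K) = δ (x : K))
    -- the natural order `Λ`, inside the skew polynomial ring `R = O_K[t;σ,δ]`:
    (P : SkewPolyRing (𝓞 K) R σ₀ δ₀) (f : R) (m : ℕ) (hm : 2 ≤ m)
    (hf : P.MonicDeg f m) (modr : R → R) (hmodr : P.IsModr f m modr)
    -- an ideal `I` of `O_F`, and `J = I·O_K`:
    (I : Ideal (𝓞 F)) (J : Ideal (𝓞 K)) (hJ : J = Ideal.map (algebraMap (𝓞 F) (𝓞 K)) I)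
    -- the induced maps `σ̄`, `δ̄` on `O_K/J` and the skew polynomial ring
    -- `R' = (O_K/J)[t;σ̄,δ̄]`:
    (σb : (𝓞 K ⧸ J) →+* (𝓞 K ⧸ J))
    (hσb : ∀ x : 𝓞 K, σb (Ideal.Quotient.mk J x) = Ideal.Quotient.mk J (σ₀ x))
    (δb : (𝓞 K ⧸ J) →+ (𝓞 K ⧸ J))
    (hδb : ∀ x : 𝓞 K, δb (Ideal.Quotient.mk J x) = Ideal.Quotient.mk J (δ₀ x))
    (P' : SkewPolyRing (𝓞 K ⧸ J) R' σb δb)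
    -- the reduction map `red : R → R'` and the reduced polynomial `f̄`:
    (red : R → R')
    (hred : ∀ g : R, red g = P'.coeff.symm
      (Finsupp.mapRange (Ideal.Quotient.mk J) (map_zero _) (P.coeff g)))
    (modr' : R' → R') (hmodr' : P'.IsModr (red f) m modr') :
    -- (1)  `I·Λ = {Σ_{i<m} aᵢ tⁱ : aᵢ ∈ I·O_K}`:
    (∀ g : R,
      (g ∈ AddSubgroup.closure {x : R | ∃ (a : 𝓞 F) (l : R), a ∈ I ∧ P.degLT l m ∧
          x = modr (P.ι (algebraMap (𝓞 F) (𝓞 K) a) * l)}) ↔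
      (P.degLT g m ∧ ∀ i, P.coeff g i ∈ J)) ∧
    -- (2)  `red` is additive and unital:
    (∀ g h : R, red (g + h) = red g + red h) ∧ red 1 = 1 ∧
    -- (3)  `red` is multiplicative for the Petit products:
    (∀ g h : R, P.degLT g m → P.degLT h m →
        red (modr (g * h)) = modr' (red g * red h)) ∧
    -- (4)  `red` maps `Λ` onto the reduced Petit algebra:
    (∀ g : R, P.degLT g m → P'.degLT (red g) m) ∧
    (∀ y : R', P'.degLT y m → ∃ g : R, P.degLT g m ∧ red g = y) ∧
    -- (5)  the kernel of `red` on `Λ` is `I·Λ`: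
    (∀ g : R, P.degLT g m → (red g = 0 ↔ ∀ i, P.coeff g i ∈ J)) :=
  natural_order_quotient_iso_general σ₀ δ₀ P f m hf modr hmodr I J hJ σb hσb δb hδb P' red hred
    modr' hmodr'
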